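/- Let μ be a probability measure on ℝ with μ([−r, r]) = 1 for some r > 0, and let G(z) = ∫_ℝ (z − t)⁻¹ dμ(t), which is well defined on U := {z ∈ ℂ : |z| > 4r}. Then: (a) |G(z)| < 1/(3r) for all z ∈ U; (b) G is injective on U; (c) for every w ∈ ℂ with 0 < |w| < 1/(6r) there exists z ∈ U with G(z) = w. -/

import Mathlib

/-!
Write `F z = z * G z = ∫ z / (z - t) dμ(t)`. Since `z / (z - t) - 1 = t / (z - t)`, we get
`‖F z - 1‖ ≤ r / (‖z‖ - r)`, and `F` is Lipschitz with constant `r / ((‖z₁‖ - r) * (‖z₂‖ - r))`.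
If `G z₁ = G z₂ = w` with `z₁ ≠ z₂`, then `F z₁ - F z₂ = (z₁ - z₂) * w` forces `w` to be small,
while `‖z₁ * w - 1‖ ≤ r / (‖z₁‖ - r)` forces it to be large. Solving `G z = w` amounts to the
fixed-point equation `z = w⁻¹ * F z`, and `z ↦ w⁻¹ * F z` is a `2/3`-contraction of the closed
ball of radius `‖w⁻¹‖ / 3` about `w⁻¹`.
-/

open MeasureTheory Filter Complex

/-- The Cauchy transform `G_μ(z) = ∫ (z − t)⁻¹ dμ(t)` of a measure `μ` on `ℝ`. -/
noncomputable def cauchyTransform (μ : Measure ℝ) (z : ℂ) : ℂ :=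
  ∫ t : ℝ, (z - (t : ℂ))⁻¹ ∂μ

theorem LipschitzOnWith.exists_isFixedPt {α : Type*} [MetricSpace α] {s : Set α} {f : α → α}
    {K : NNReal} (hf : LipschitzOnWith K f s) (hK : K < 1) (hs : IsComplete s)
    (hsf : Set.MapsTo f s s) (hne : s.Nonempty) : ∃ y ∈ s, Function.IsFixedPt f y := by
  obtain ⟨x, hx⟩ := hne
  obtain ⟨y, hy, hfix, -⟩ :=
    ContractingWith.exists_fixedPoint' hs hsf ⟨hK, hf.mapsToRestrict hsf⟩ hx (edist_ne_top _ _)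
  exact ⟨y, hy, hfix⟩

section Pointwise

variable {r t : ℝ}

lemma norm_sub_ofReal_ge (z : ℂ) (ht : |t| ≤ r) : ‖z‖ - r ≤ ‖z - t‖ := by
  have : ‖(t : ℂ)‖ ≤ r := by rwa [Complex.norm_real, Real.norm_eq_abs]
  linarith [norm_sub_norm_le z t]

lemma sub_ofReal_ne_zero {z : ℂ} (ht : |t| ≤ r) (hz : r < ‖z‖) : z - t ≠ 0 :=
  norm_pos_iff.mp ((sub_pos.mpr hz).trans_le (norm_sub_ofReal_ge z ht))

lemma norm_inv_sub_ofReal_le {z : ℂ} (ht : |t| ≤ r) (hz : r < ‖z‖) :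
    ‖(z - t)⁻¹‖ ≤ (‖z‖ - r)⁻¹ := by
  rw [norm_inv]
  exact inv_anti₀ (by linarith) (norm_sub_ofReal_ge z ht)

lemma norm_mul_inv_sub_ofReal_sub_one_le {z : ℂ} (ht : |t| ≤ r) (hz : r < ‖z‖) :
    ‖z * (z - t)⁻¹ - 1‖ ≤ r / (‖z‖ - r) := by
  have hzt := sub_ofReal_ne_zero ht hz
  have : z * (z - t)⁻¹ - 1 = t * (z - t)⁻¹ := by field_simp; ring
  rw [this, norm_mul, div_eq_mul_inv, Complex.norm_real, Real.norm_eq_abs]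
  exact mul_le_mul ht (norm_inv_sub_ofReal_le ht hz) (norm_nonneg _) ((abs_nonneg t).trans ht)

lemma norm_mul_inv_sub_ofReal_sub_le {z₁ z₂ : ℂ} (ht : |t| ≤ r) (h₁ : r < ‖z₁‖)
    (h₂ : r < ‖z₂‖) :
    ‖z₁ * (z₁ - t)⁻¹ - z₂ * (z₂ - t)⁻¹‖ ≤ r / ((‖z₁‖ - r) * (‖z₂‖ - r)) * ‖z₁ - z₂‖ := by
  have hz₁t := sub_ofReal_ne_zero ht h₁
  have hz₂t := sub_ofReal_ne_zero ht h₂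
  have : z₁ * (z₁ - t)⁻¹ - z₂ * (z₂ - t)⁻¹ = t * ((z₁ - t)⁻¹ * (z₂ - t)⁻¹) * -(z₁ - z₂) := by
    field_simp; ring
  rw [this, norm_mul, norm_mul, norm_mul, norm_neg, Complex.norm_real, Real.norm_eq_abs,
    div_eq_mul_inv, mul_inv]
  gcongr
  · exact (abs_nonneg t).trans ht
  · exact norm_inv_sub_ofReal_le ht h₁
  · exact norm_inv_sub_ofReal_le ht h₂

end Pointwise

section Measure

variable {μ : Measure ℝ} {r : ℝ}

lemma integrable_inv_sub_ofReal [IsFiniteMeasure μ] (hμ : ∀ᵐ t ∂μ, |t| ≤ r) {z : ℂ}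
    (hz : r < ‖z‖) : Integrable (fun t : ℝ => (z - t)⁻¹) μ :=
  Integrable.of_bound (by fun_prop) _ (hμ.mono fun _ ht => norm_inv_sub_ofReal_le ht hz)

variable [IsProbabilityMeasure μ]

lemma norm_cauchyTransform_le (hμ : ∀ᵐ t ∂μ, |t| ≤ r) {z : ℂ} (hz : r < ‖z‖) :
    ‖cauchyTransform μ z‖ ≤ (‖z‖ - r)⁻¹ := by
  simpa [cauchyTransform] using norm_integral_le_of_norm_le_const
    (hμ.mono fun _ ht => norm_inv_sub_ofReal_le ht hz)

lemma norm_mul_cauchyTransform_sub_one_le (hμ : ∀ᵐ t ∂μ, |t| ≤ r) {z : ℂ} (hz : r < ‖z‖) :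
    ‖z * cauchyTransform μ z - 1‖ ≤ r / (‖z‖ - r) := by
  have : z * cauchyTransform μ z - 1 = ∫ t, (z * (z - t)⁻¹ - 1) ∂μ := by
    rw [cauchyTransform, ← integral_const_mul,
      integral_sub ((integrable_inv_sub_ofReal hμ hz).const_mul z) (integrable_const 1)]
    simp
  rw [this]
  simpa using norm_integral_le_of_norm_le_const
    (hμ.mono fun _ ht => norm_mul_inv_sub_ofReal_sub_one_le ht hz)

lemma norm_mul_cauchyTransform_sub_le (hμ : ∀ᵐ t ∂μ, |t| ≤ r) {z₁ z₂ : ℂ} (h₁ : r < ‖z₁‖)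
    (h₂ : r < ‖z₂‖) :
    ‖z₁ * cauchyTransform μ z₁ - z₂ * cauchyTransform μ z₂‖ ≤
      r / ((‖z₁‖ - r) * (‖z₂‖ - r)) * ‖z₁ - z₂‖ := by
  have : z₁ * cauchyTransform μ z₁ - z₂ * cauchyTransform μ z₂ =
      ∫ t, (z₁ * (z₁ - t)⁻¹ - z₂ * (z₂ - t)⁻¹) ∂μ := by
    rw [cauchyTransform, cauchyTransform, ← integral_const_mul, ← integral_const_mul,
      integral_sub ((integrable_inv_sub_ofReal hμ h₁).const_mul z₁)
        ((integrable_inv_sub_ofReal hμ h₂).const_mul z₂)]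
  rw [this]
  simpa using norm_integral_le_of_norm_le_const
    (hμ.mono fun _ ht => norm_mul_inv_sub_ofReal_sub_le ht h₁ h₂)

end Measure

section Exterior

variable {μ : Measure ℝ} [IsProbabilityMeasure μ] {r : ℝ}

lemma ae_abs_le_of_measure_Icc_eq_one (h : μ (Set.Icc (-r) r) = 1) : ∀ᵐ t ∂μ, |t| ≤ r := by
  have hIcc : ∀ᵐ t ∂μ, t ∈ Set.Icc (-r) r := (mem_ae_iff_prob_eq_one measurableSet_Icc).mpr h
  exact hIcc.mono fun _ ht => abs_le.mpr ht

lemma cauchyTransform_injOn (hμ : ∀ᵐ t ∂μ, |t| ≤ r) :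
    Set.InjOn (cauchyTransform μ) {z : ℂ | 4 * r < ‖z‖} := by
  intro z₁ (h₁ : 4 * r < ‖z₁‖) z₂ (h₂ : 4 * r < ‖z₂‖) heq
  by_contra hne
  obtain ⟨t, ht⟩ := hμ.exists
  have hr : 0 ≤ r := (abs_nonneg t).trans ht
  set w := cauchyTransform μ z₁
  have hF := norm_mul_cauchyTransform_sub_le hμ (by linarith : r < ‖z₁‖) (by linarith : r < ‖z₂‖)
  rw [← heq, ← sub_mul, norm_mul, mul_comm] at hF
  have hw_le : ‖w‖ ≤ r / ((‖z₁‖ - r) * (‖z₂‖ - r)) :=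
    le_of_mul_le_mul_right hF (norm_pos_iff.mpr (sub_ne_zero.mpr hne))
  have hw_ge : 1 - r / (‖z₁‖ - r) ≤ ‖z₁‖ * ‖w‖ := by
    have := norm_mul_cauchyTransform_sub_one_le hμ (by linarith : r < ‖z₁‖)
    have h1 := norm_sub_norm_le (1 : ℂ) (z₁ * w)
    rw [norm_one, norm_sub_rev, norm_mul] at h1
    linarith
  have hlt : ‖z₁‖ * (r / ((‖z₁‖ - r) * (‖z₂‖ - r))) < 1 - r / (‖z₁‖ - r) := by
    have ha : 0 < ‖z₁‖ - r := by linarith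
    have hb : 0 < ‖z₂‖ - r := by linarith
    rw [mul_div_assoc', one_sub_div ha.ne', div_lt_div_iff₀ (mul_pos ha hb) ha]
    have key : ‖z₁‖ * r < (‖z₁‖ - r - r) * (‖z₂‖ - r) := by
      nlinarith [mul_pos (by linarith : 0 < ‖z₁‖ - 2 * r) (by linarith : 0 < ‖z₂‖ - 4 * r),
        mul_nonneg hr (by linarith : 0 ≤ 2 * ‖z₁‖ - 6 * r)]
    nlinarith [mul_lt_mul_of_pos_right key ha]
  linarith [mul_le_mul_of_nonneg_left hw_le (norm_nonneg z₁)]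

lemma norm_gt_of_mem_closedBall {u z : ℂ} (hu : 6 * r < ‖u‖)
    (hz : z ∈ Metric.closedBall u (‖u‖ / 3)) : ‖u‖ / 2 + r < ‖z‖ := by
  rw [Metric.mem_closedBall, dist_eq_norm] at hz
  linarith [norm_sub_norm_le u z, norm_sub_rev u z]

lemma mapsTo_mul_mul_cauchyTransform (hμ : ∀ᵐ t ∂μ, |t| ≤ r) {u : ℂ} (hu : 6 * r < ‖u‖) :
    Set.MapsTo (fun z => u * (z * cauchyTransform μ z)) (Metric.closedBall u (‖u‖ / 3))
      (Metric.closedBall u (‖u‖ / 3)) := by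
  intro z hz
  have hz' := norm_gt_of_mem_closedBall hu hz
  have hu₀ := norm_nonneg u
  rw [Metric.mem_closedBall, dist_eq_norm]
  calc ‖u * (z * cauchyTransform μ z) - u‖ = ‖u‖ * ‖z * cauchyTransform μ z - 1‖ := by
        rw [← norm_mul, mul_sub, mul_one]
    _ ≤ ‖u‖ * (r / (‖z‖ - r)) :=
      mul_le_mul_of_nonneg_left (norm_mul_cauchyTransform_sub_one_le hμ (by linarith))
        (norm_nonneg u)
    _ ≤ ‖u‖ / 3 := by
      rw [mul_div_assoc', div_le_div_iff₀ (by linarith) (by norm_num)]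
      nlinarith

lemma lipschitzOnWith_mul_mul_cauchyTransform (hμ : ∀ᵐ t ∂μ, |t| ≤ r) {u : ℂ}
    (hu : 6 * r < ‖u‖) :
    LipschitzOnWith (2 / 3) (fun z => u * (z * cauchyTransform μ z))
      (Metric.closedBall u (‖u‖ / 3)) := by
  refine LipschitzOnWith.of_dist_le_mul fun z₁ h₁ z₂ h₂ => ?_
  have h₁' := norm_gt_of_mem_closedBall hu h₁
  have h₂' := norm_gt_of_mem_closedBall hu h₂
  have hu₀ := norm_nonneg u
  have hK : ‖u‖ * (r / ((‖z₁‖ - r) * (‖z₂‖ - r))) ≤ 2 / 3 := by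
    rw [mul_div_assoc', div_le_iff₀ (by nlinarith)]
    nlinarith [mul_lt_mul'' (by linarith : ‖u‖ / 2 < ‖z₁‖ - r) (by linarith : ‖u‖ / 2 < ‖z₂‖ - r)
      (by positivity) (by positivity)]
  rw [dist_eq_norm, dist_eq_norm, ← mul_sub, norm_mul]
  calc ‖u‖ * ‖z₁ * cauchyTransform μ z₁ - z₂ * cauchyTransform μ z₂‖
      ≤ ‖u‖ * (r / ((‖z₁‖ - r) * (‖z₂‖ - r)) * ‖z₁ - z₂‖) :=
        mul_le_mul_of_nonneg_left
          (norm_mul_cauchyTransform_sub_le hμ (by linarith) (by linarith)) (norm_nonneg u)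
    _ ≤ 2 / 3 * ‖z₁ - z₂‖ := by
        rw [← mul_assoc]
        exact mul_le_mul_of_nonneg_right hK (norm_nonneg _)
    _ = ((2 / 3 : NNReal) : ℝ) * ‖z₁ - z₂‖ := by norm_num

lemma exists_cauchyTransform_eq (hμ : ∀ᵐ t ∂μ, |t| ≤ r) {w : ℂ} (hw₀ : w ≠ 0)
    (hw : ‖w‖ < 1 / (6 * r)) : ∃ z, 4 * r < ‖z‖ ∧ cauchyTransform μ z = w := by
  have hr : 0 < r := by
    have := one_div_pos.mp ((norm_nonneg w).trans_lt hw)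
    linarith
  have hu : 6 * r < ‖w⁻¹‖ := by
    rw [norm_inv, lt_inv_comm₀ (by positivity) (norm_pos_iff.mpr hw₀)]
    simpa using hw
  obtain ⟨z, hzD, hfix⟩ := (lipschitzOnWith_mul_mul_cauchyTransform hμ hu).exists_isFixedPt
    (by norm_num) Metric.isClosed_closedBall.isComplete (mapsTo_mul_mul_cauchyTransform hμ hu)
    ⟨w⁻¹, Metric.mem_closedBall_self (by positivity)⟩
  have hz := norm_gt_of_mem_closedBall hu hzD
  refine ⟨z, by linarith, ?_⟩
  have hz₀ : z ≠ 0 := norm_pos_iff.mp (by linarith)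
  have hGz : w⁻¹ * cauchyTransform μ z = 1 :=
    mul_left_cancel₀ hz₀ (by rw [mul_one, mul_left_comm]; exact hfix)
  rw [eq_inv_of_mul_eq_one_right hGz, inv_inv]

end Exterior

/-- For a probability measure `μ` on `ℝ` with `μ([−r, r]) = 1`, the Cauchy transform `G`
on `U = {|z| > 4r}` satisfies: (a) `|G(z)| < 1/(3r)` on `U`; (b) `G` is injective on `U`;
(c) every `w` with `0 < |w| < 1/(6r)` is attained by `G` on `U`. -/
theorem cauchyTransform_injective_on_exterior (μ : Measure ℝ) [IsProbabilityMeasure μ]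
    (r : ℝ) (hr : 0 < r) (hsupp : μ (Set.Icc (-r) r) = 1) :
    (∀ z : ℂ, 4 * r < ‖z‖ →
      ‖cauchyTransform μ z‖ < 1 / (3 * r)) ∧
    Set.InjOn (cauchyTransform μ) {z : ℂ | 4 * r < ‖z‖} ∧
    (∀ w : ℂ, 0 < ‖w‖ → ‖w‖ < 1 / (6 * r) →
      ∃ z : ℂ, 4 * r < ‖z‖ ∧ cauchyTransform μ z = w) := by
  have hμ := ae_abs_le_of_measure_Icc_eq_one hsupp
  refine ⟨fun z hz => ?_, cauchyTransform_injOn hμ,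
    fun w hw₀ hw => exists_cauchyTransform_eq hμ (norm_pos_iff.mp hw₀) hw⟩
  calc ‖cauchyTransform μ z‖ ≤ (‖z‖ - r)⁻¹ := norm_cauchyTransform_le hμ (by linarith)
    _ < 1 / (3 * r) := by
      rw [one_div]
      exact inv_strictAnti₀ (by positivity) (by linarith)
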